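/- Let E be a real normed vector space and let f, g : E → ℝ be convex continuous functions admitting a common continuous affine minorant (there exist φ₀ ∈ E* and c ∈ ℝ with φ₀(u) − c ≤ f(u) and φ₀(u) − c ≤ g(u) for all u ∈ E). For s ∈ [0,1] define U_s(f,g)(x) = ∫₀¹ (f !_{st+(1−s)/2} g)(x) / ( t(1−t)(π² + (log(t/(1−t)))²) ) dt. Then for every s ∈ [0,1] and every x ∈ E, (f ! g)(x) ≤ U_s(f,g)(x) ≤ (1−s)(f ! g)(x) + s·L(f,g)(x) ≤ L(f,g)(x); moreover, for each fixed x the map s ↦ U_s(f,g)(x) is convex and monotone increasing on [0,1]. -/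

import Mathlib

/-!
For fixed `x`, `t ↦ (f !_t g)(x)` is a supremum of affine functions of `t`, hence convex on
`[0,1]`, and the common affine minorant keeps it finite and bounded. The weight
`Ψ(t) = 1/(t(1−t)(π² + log²(t/(1−t))))` is a probability density on `(0,1)`, symmetric under
`t ↦ 1 − t`: the substitution `t = sigmoid u` turns it into `du/(π² + u²)`. So `s ↦ U_s` is
convex and even on `[−1,1]`, hence increasing on `[0,1]`, with `U_0 = f ! g`. Moreover
`U_1 = L(f,g)`: exchanging the integrals in `L`, the `λ`-integral of the kernel
`sin(πλ)/π · t^{λ−1}(1−t)^{−λ}` is exactly `Ψ(t)`. The chain of inequalities is convexity of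
`s ↦ U_s` between `s = 0` and `s = 1`.
-/

open Real

/-- The `t`-weighted functional harmonic mean of `f,g : E → ℝ`, evaluated at `x`. -/
noncomputable def funHarm {E : Type*} [NormedAddCommGroup E] [NormedSpace ℝ E]
    (f g : E → ℝ) (t : ℝ) (x : E) : ℝ :=
  sSup { r : ℝ | ∃ φ : E →L[ℝ] ℝ, ∃ c₁ c₂ : ℝ,
    (∀ u : E, φ u - f u ≤ c₁) ∧ (∀ u : E, φ u - g u ≤ c₂) ∧
    r = φ x - (1 - t) * c₁ - t * c₂ }

/-- The `λ`-weighted functional geometric mean of `f,g : E → ℝ`, evaluated at `x`. -/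
noncomputable def funGeom {E : Type*} [NormedAddCommGroup E] [NormedSpace ℝ E]
    (f g : E → ℝ) (l : ℝ) (x : E) : ℝ :=
  (Real.sin (π * l) / π) *
    ∫ t in (0 : ℝ)..1, t ^ (l - 1) * (1 - t) ^ (-l) * funHarm f g t x

/-- The logarithmic mean `L(f,g)(x) = ∫₀¹ (f ♯_t g)(x) dt`. -/
noncomputable def funLog {E : Type*} [NormedAddCommGroup E] [NormedSpace ℝ E]
    (f g : E → ℝ) (x : E) : ℝ :=
  ∫ t in (0 : ℝ)..1, funGeom f g t x

/-- The family `U_s(f,g)(x) = ∫₀¹ (f !_{st+(1−s)/2} g)(x) Ψ(t) dt` with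
`Ψ(t) = 1/(t(1−t)(π² + (log(t/(1−t)))²))`. -/
noncomputable def funU {E : Type*} [NormedAddCommGroup E] [NormedSpace ℝ E]
    (f g : E → ℝ) (s : ℝ) (x : E) : ℝ :=
  ∫ t in (0 : ℝ)..1,
    funHarm f g (s * t + (1 - s) / 2) x /
      (t * (1 - t) * (π ^ 2 + Real.log (t / (1 - t)) ^ 2))

open MeasureTheory Set

theorem ConvexOn.monotoneOn_of_neg_eq {φ : ℝ → ℝ} {a : ℝ} (hφ : ConvexOn ℝ (Icc (-a) a) φ)
    (heven : ∀ s, φ (-s) = φ s) : MonotoneOn φ (Icc 0 a) := by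
  intro s₁ hs₁ s₂ hs₂ h12
  have hseg : s₁ ∈ segment ℝ (-s₂) s₂ := by
    rw [segment_eq_Icc (by linarith [hs₂.1])]
    exact ⟨by linarith [hs₁.1], h12⟩
  simpa only [heven, max_self] using
    hφ.le_on_segment ⟨neg_le_neg hs₂.2, by linarith [hs₂.1, hs₂.2]⟩
      ⟨by linarith [hs₂.1, hs₂.2], hs₂.2⟩ hseg

theorem convexOn_integral {β α : Type*} [AddCommGroup β] [Module ℝ β] [MeasurableSpace α]
    {μ : Measure α} {S : Set β} {F : β → α → ℝ} (hS : Convex ℝ S)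
    (hint : ∀ s ∈ S, Integrable (F s) μ) (hconv : ∀ᵐ ω ∂μ, ConvexOn ℝ S fun s => F s ω) :
    ConvexOn ℝ S fun s => ∫ ω, F s ω ∂μ := by
  refine ⟨hS, fun s₁ hs₁ s₂ hs₂ a b ha hb hab => ?_⟩
  have hint₁ := (hint s₁ hs₁).const_mul a
  have hint₂ := (hint s₂ hs₂).const_mul b
  simp only [smul_eq_mul]
  calc ∫ ω, F (a • s₁ + b • s₂) ω ∂μ ≤ ∫ ω, (a * F s₁ ω + b * F s₂ ω) ∂μ :=
        integral_mono_ae (hint _ (hS hs₁ hs₂ ha hb hab)) (hint₁.add hint₂) <| by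
          filter_upwards [hconv] with ω hω using hω.2 hs₁ hs₂ ha hb hab
    _ = a * ∫ ω, F s₁ ω ∂μ + b * ∫ ω, F s₂ ω ∂μ := by
        rw [integral_add hint₁ hint₂, integral_const_mul, integral_const_mul]

theorem intervalIntegral_zero_one_eq_setIntegral_Ioo (F : ℝ → ℝ) :
    ∫ t in (0:ℝ)..1, F t = ∫ t in Ioo 0 1, F t := by
  rw [intervalIntegral.integral_of_le zero_le_one, integral_Ioc_eq_integral_Ioo]

theorem integral_univ_inv_sq_add_sq {a : ℝ} (ha : 0 < a) :
    ∫ u : ℝ, (a ^ 2 + u ^ 2)⁻¹ = π / a := by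
  have h (u : ℝ) : (a ^ 2 + u ^ 2)⁻¹ = (a ^ 2)⁻¹ * (1 + (a⁻¹ * u) ^ 2)⁻¹ := by
    field_simp
  simp_rw [h]
  rw [integral_const_mul, Measure.integral_comp_mul_left (fun y => (1 + y ^ 2)⁻¹) a⁻¹,
    integral_univ_inv_one_add_sq, inv_inv, abs_of_pos ha, smul_eq_mul]
  field_simp

section FunHarm

variable {E : Type*} [NormedAddCommGroup E] [NormedSpace ℝ E] {f g : E → ℝ} {t : ℝ} {x : E}
  {φ₀ : E →L[ℝ] ℝ} {c : ℝ}

theorem le_funHarm (ht : t ∈ Icc (0:ℝ) 1) {φ : E →L[ℝ] ℝ} {c₁ c₂ : ℝ}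
    (h₁ : ∀ u, φ u - f u ≤ c₁) (h₂ : ∀ u, φ u - g u ≤ c₂) :
    φ x - (1 - t) * c₁ - t * c₂ ≤ funHarm f g t x := by
  refine le_csSup ⟨(1 - t) * f x + t * g x, ?_⟩ ⟨φ, c₁, c₂, h₁, h₂, rfl⟩
  rintro _ ⟨ψ, d₁, d₂, hd₁, hd₂, rfl⟩
  nlinarith [hd₁ x, hd₂ x, ht.1, ht.2]

theorem funHarm_le_of_forall (hm : ∀ u, φ₀ u - c ≤ f u ∧ φ₀ u - c ≤ g u) {b : ℝ}
    (hb : ∀ (φ : E →L[ℝ] ℝ) (c₁ c₂ : ℝ), (∀ u, φ u - f u ≤ c₁) → (∀ u, φ u - g u ≤ c₂) →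
      φ x - (1 - t) * c₁ - t * c₂ ≤ b) :
    funHarm f g t x ≤ b := by
  refine csSup_le ⟨_, φ₀, c, c, fun u => ?_, fun u => ?_, rfl⟩ ?_
  · linarith [(hm u).1]
  · linarith [(hm u).2]
  · rintro _ ⟨φ, c₁, c₂, h₁, h₂, rfl⟩
    exact hb φ c₁ c₂ h₁ h₂

variable (hm : ∀ u, φ₀ u - c ≤ f u ∧ φ₀ u - c ≤ g u)
include hm

theorem sub_le_funHarm (ht : t ∈ Icc (0:ℝ) 1) : φ₀ x - c ≤ funHarm f g t x := by
  have := le_funHarm (f := f) (g := g) (x := x) (φ := φ₀) (c₁ := c) (c₂ := c) ht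
    (fun u => by linarith [(hm u).1]) (fun u => by linarith [(hm u).2])
  linarith

theorem funHarm_le (ht : t ∈ Icc (0:ℝ) 1) : funHarm f g t x ≤ (1 - t) * f x + t * g x :=
  funHarm_le_of_forall hm fun φ c₁ c₂ h₁ h₂ => by nlinarith [h₁ x, h₂ x, ht.1, ht.2]

theorem abs_funHarm_le (ht : t ∈ Icc (0:ℝ) 1) :
    |funHarm f g t x| ≤ |φ₀ x - c| + |f x| + |g x| := by
  have hlow := sub_le_funHarm (x := x) hm ht
  have hup := funHarm_le (x := x) hm ht
  have hf : (1 - t) * f x ≤ |f x| := by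
    nlinarith [mul_le_mul_of_nonneg_left (le_abs_self (f x)) (sub_nonneg.2 ht.2),
      mul_nonneg ht.1 (abs_nonneg (f x))]
  have hg : t * g x ≤ |g x| := by
    nlinarith [mul_le_mul_of_nonneg_left (le_abs_self (g x)) ht.1,
      mul_nonneg (sub_nonneg.2 ht.2) (abs_nonneg (g x))]
  rw [abs_le]
  constructor <;> linarith [neg_abs_le (φ₀ x - c), le_abs_self (φ₀ x - c), abs_nonneg (f x),
    abs_nonneg (g x)]

theorem convexOn_funHarm : ConvexOn ℝ (Icc 0 1) fun t => funHarm f g t x := by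
  refine ⟨convex_Icc 0 1, fun t₁ ht₁ t₂ ht₂ a b ha hb hab => ?_⟩
  refine funHarm_le_of_forall hm fun φ c₁ c₂ h₁ h₂ => ?_
  have hb' : b = 1 - a := by linarith
  subst hb'
  have e₁ := le_funHarm (x := x) ht₁ h₁ h₂
  have e₂ := le_funHarm (x := x) ht₂ h₁ h₂
  simp only [smul_eq_mul]
  nlinarith [mul_le_mul_of_nonneg_left e₁ ha, mul_le_mul_of_nonneg_left e₂ hb]

theorem continuousOn_funHarm : ContinuousOn (fun t => funHarm f g t x) (Ioo 0 1) :=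
  ((convexOn_funHarm hm).subset Ioo_subset_Icc_self (convex_Ioo 0 1)).continuousOn isOpen_Ioo

end FunHarm

noncomputable def psi (t : ℝ) : ℝ :=
  (t * (1 - t) * (π ^ 2 + Real.log (t / (1 - t)) ^ 2))⁻¹

theorem psi_pos {t : ℝ} (ht : t ∈ Ioo (0:ℝ) 1) : 0 < psi t := by
  have h₁ : 0 < t := ht.1
  have h₂ : 0 < 1 - t := sub_pos.2 ht.2
  unfold psi
  positivity

theorem psi_one_sub (t : ℝ) : psi (1 - t) = psi t := by
  rw [psi, psi, sub_sub_cancel, ← inv_div, Real.log_inv]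
  ring_nf

theorem continuousOn_psi : ContinuousOn psi (Ioo 0 1) := by
  refine ContinuousOn.inv₀ ?_ fun t ht => (inv_pos.1 (psi_pos ht)).ne'
  have hlog : ContinuousOn (fun t : ℝ => Real.log (t / (1 - t))) (Ioo 0 1) :=
    ContinuousOn.log (continuousOn_id.div (by fun_prop) fun t ht => (sub_pos.2 ht.2).ne')
      fun t ht => (div_pos ht.1 (sub_pos.2 ht.2)).ne'
  fun_prop

theorem deriv_sigmoid_mul_psi_sigmoid (u : ℝ) :
    |sigmoid u * (1 - sigmoid u)| • psi (sigmoid u) = (π ^ 2 + u ^ 2)⁻¹ := by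
  have h₁ := sigmoid_pos u
  have h₂ : 0 < 1 - sigmoid u := sub_pos.2 (sigmoid_lt_one u)
  have hlogit : Real.log (sigmoid u / (1 - sigmoid u)) = u := by
    rw [← sigmoid_neg, ← sigmoid_mul_rexp_neg, div_mul_cancel_left₀ h₁.ne', ← Real.exp_neg,
      neg_neg, Real.log_exp]
  rw [psi, hlogit, abs_of_pos (mul_pos h₁ h₂), smul_eq_mul, mul_inv, ← mul_assoc,
    mul_inv_cancel₀ (mul_pos h₁ h₂).ne', one_mul]

theorem integral_psi : ∫ t in Ioo 0 1, psi t = 1 := by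
  rw [← range_sigmoid, ← image_univ, integral_image_eq_integral_abs_deriv_smul
    MeasurableSet.univ (fun u _ => (hasDerivAt_sigmoid u).hasDerivWithinAt)
    sigmoid_injective.injOn, Measure.restrict_univ]
  simp only [deriv_sigmoid_mul_psi_sigmoid]
  rw [integral_univ_inv_sq_add_sq pi_pos, div_self pi_ne_zero]

theorem integrableOn_psi : IntegrableOn psi (Ioo 0 1) :=
  Integrable.of_integral_ne_zero (by rw [integral_psi]; exact one_ne_zero)

theorem mul_add_one_sub_div_two_mem_Ioo {s t : ℝ} (hs : s ∈ Icc (-1:ℝ) 1) (ht : t ∈ Ioo (0:ℝ) 1) :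
    s * t + (1 - s) / 2 ∈ Ioo (0:ℝ) 1 := by
  have h : |s * (2 * t - 1)| < 1 := by
    rw [abs_mul]
    exact mul_lt_one_of_nonneg_of_lt_one_right (abs_le.2 hs) (abs_nonneg _)
      (abs_lt.2 ⟨by linarith [ht.1], by linarith [ht.2]⟩)
  obtain ⟨h₁, h₂⟩ := abs_lt.1 h
  constructor <;> linarith

section FunU

variable {E : Type*} [NormedAddCommGroup E] [NormedSpace ℝ E] {f g : E → ℝ} {x : E}
  {φ₀ : E →L[ℝ] ℝ} {c : ℝ}

theorem funU_eq (s : ℝ) :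
    funU f g s x = ∫ t in (0:ℝ)..1, funHarm f g (s * t + (1 - s) / 2) x * psi t := by
  simp only [funU, psi, div_eq_mul_inv]

theorem funU_neg (s : ℝ) : funU f g (-s) x = funU f g s x := by
  have hreflect := intervalIntegral.integral_comp_sub_left
    (fun t => funHarm f g (s * t + (1 - s) / 2) x * psi t) (a := 0) (b := 1) 1
  rw [sub_self, sub_zero] at hreflect
  rw [funU_eq, funU_eq, ← hreflect]
  congr 1 with t
  rw [psi_one_sub]
  ring_nf

theorem funU_zero : funU f g 0 x = funHarm f g (1 / 2) x := by
  simp only [funU_eq, zero_mul, zero_add, sub_zero, intervalIntegral.integral_const_mul,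
    intervalIntegral_zero_one_eq_setIntegral_Ioo, integral_psi, mul_one]

variable (hm : ∀ u, φ₀ u - c ≤ f u ∧ φ₀ u - c ≤ g u)
include hm

theorem integrableOn_funHarm_comp_mul_psi {τ : ℝ → ℝ} (hτ : ContinuousOn τ (Ioo 0 1))
    (hτ_mem : MapsTo τ (Ioo 0 1) (Ioo 0 1)) :
    IntegrableOn (fun t => funHarm f g (τ t) x * psi t) (Ioo 0 1) := by
  refine integrableOn_psi.bdd_mul (c := |φ₀ x - c| + |f x| + |g x|)
    (((continuousOn_funHarm hm).comp hτ hτ_mem).aestronglyMeasurable measurableSet_Ioo) ?_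
  filter_upwards [ae_restrict_mem measurableSet_Ioo] with t ht
  exact abs_funHarm_le hm (Ioo_subset_Icc_self (hτ_mem ht))

theorem convexOn_funU : ConvexOn ℝ (Icc (-1) 1) fun s => funU f g s x := by
  simp only [funU_eq, intervalIntegral_zero_one_eq_setIntegral_Ioo]
  refine convexOn_integral (convex_Icc _ _) (fun s hs => integrableOn_funHarm_comp_mul_psi hm
    (by fun_prop) fun t ht => mul_add_one_sub_div_two_mem_Ioo hs ht) ?_
  filter_upwards [ae_restrict_mem measurableSet_Ioo] with t ht
  refine ⟨convex_Icc _ _, fun s₁ hs₁ s₂ hs₂ a b ha hb hab => ?_⟩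
  have key := (convexOn_funHarm (x := x) hm).2
    (Ioo_subset_Icc_self (mul_add_one_sub_div_two_mem_Ioo hs₁ ht))
    (Ioo_subset_Icc_self (mul_add_one_sub_div_two_mem_Ioo hs₂ ht)) ha hb hab
  have harg : (a * s₁ + b * s₂) * t + (1 - (a * s₁ + b * s₂)) / 2
      = a * (s₁ * t + (1 - s₁) / 2) + b * (s₂ * t + (1 - s₂) / 2) := by
    linear_combination (-1 / 2) * hab
  simp only [smul_eq_mul, harg] at key ⊢
  nlinarith [mul_le_mul_of_nonneg_right key (psi_pos ht).le]

theorem monotoneOn_funU : MonotoneOn (fun s => funU f g s x) (Icc 0 1) :=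
  (convexOn_funU hm).monotoneOn_of_neg_eq funU_neg

end FunU

theorem integral_sin_pi_mul_mul_exp (b : ℝ) :
    ∫ l in (0:ℝ)..1, Real.sin (π * l) * Real.exp (b * l)
      = π * (Real.exp b + 1) / (π ^ 2 + b ^ 2) := by
  have hden : π ^ 2 + b ^ 2 ≠ 0 := by positivity
  have hderiv (l : ℝ) : HasDerivAt
      (fun l => Real.exp (b * l) * (b * Real.sin (π * l) - π * Real.cos (π * l)) / (π ^ 2 + b ^ 2))
      (Real.sin (π * l) * Real.exp (b * l)) l := by
    have hexp := ((hasDerivAt_id' l).const_mul b).exp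
    have hsin := ((hasDerivAt_id' l).const_mul π).sin
    have hcos := ((hasDerivAt_id' l).const_mul π).cos
    refine ((hexp.mul ((hsin.const_mul b).sub (hcos.const_mul π))).div_const _).congr_deriv ?_
    simp only [Pi.sub_apply]
    field_simp
    ring
  rw [intervalIntegral.integral_eq_sub_of_hasDerivAt (fun l _ => hderiv l)
    ((by fun_prop : Continuous fun l => Real.sin (π * l) * Real.exp (b * l)).intervalIntegrable
      0 1)]
  simp only [mul_one, mul_zero, Real.sin_pi, Real.cos_pi, Real.exp_zero, Real.sin_zero,
    Real.cos_zero]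
  field_simp
  ring

noncomputable def geomKernel (l t : ℝ) : ℝ :=
  Real.sin (π * l) / π * (t ^ (l - 1) * (1 - t) ^ (-l))

theorem geomKernel_nonneg {l t : ℝ} (hl : l ∈ Icc (0:ℝ) 1) (ht : t ∈ Ioo (0:ℝ) 1) :
    0 ≤ geomKernel l t := by
  have hsin : 0 ≤ Real.sin (π * l) := Real.sin_nonneg_of_nonneg_of_le_pi
    (mul_nonneg pi_pos.le hl.1) (mul_le_of_le_one_right pi_pos.le hl.2)
  have h₁ : 0 < t := ht.1
  have h₂ : 0 < 1 - t := sub_pos.2 ht.2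
  unfold geomKernel
  positivity

theorem continuousOn_geomKernel : ContinuousOn (Function.uncurry geomKernel) (univ ×ˢ Ioo 0 1) := by
  refine ContinuousOn.mul (by fun_prop) (ContinuousOn.mul ?_ ?_)
  · exact ContinuousOn.rpow (by fun_prop) (by fun_prop) fun p hp => Or.inl hp.2.1.ne'
  · exact ContinuousOn.rpow (by fun_prop) (by fun_prop) fun p hp => Or.inl (sub_pos.2 hp.2.2).ne'

theorem integral_geomKernel {t : ℝ} (ht : t ∈ Ioo (0:ℝ) 1) :
    ∫ l in Ioo 0 1, geomKernel l t = psi t := by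
  have h₁ : 0 < t := ht.1
  have h₂ : 0 < 1 - t := sub_pos.2 ht.2
  set b := Real.log (t / (1 - t))
  have hexp : Real.exp b = t / (1 - t) := Real.exp_log (div_pos h₁ h₂)
  have hkernel (l : ℝ) :
      geomKernel l t = t⁻¹ / π * (Real.sin (π * l) * Real.exp (b * l)) := by
    rw [geomKernel, Real.rpow_def_of_pos h₁, Real.rpow_def_of_pos h₂, ← Real.exp_add,
      show b = Real.log t - Real.log (1 - t) from Real.log_div h₁.ne' h₂.ne',
      ← Real.exp_log (inv_pos.2 h₁), Real.log_inv,
      show Real.log t * (l - 1) + Real.log (1 - t) * -l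
        = -Real.log t + (Real.log t - Real.log (1 - t)) * l by ring, Real.exp_add]
    ring_nf
  simp only [← intervalIntegral_zero_one_eq_setIntegral_Ioo, hkernel,
    intervalIntegral.integral_const_mul, integral_sin_pi_mul_mul_exp, hexp, psi]
  field_simp
  ring

section FunLog

variable {E : Type*} [NormedAddCommGroup E] [NormedSpace ℝ E] {f g : E → ℝ} {x : E}
  {φ₀ : E →L[ℝ] ℝ} {c : ℝ}

theorem funGeom_eq (l : ℝ) :
    funGeom f g l x = ∫ t in Ioo 0 1, geomKernel l t * funHarm f g t x := by
  rw [funGeom, intervalIntegral_zero_one_eq_setIntegral_Ioo, ← integral_const_mul]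
  simp only [geomKernel, mul_assoc]

variable (hm : ∀ u, φ₀ u - c ≤ f u ∧ φ₀ u - c ≤ g u)
include hm

theorem integrable_geomKernel_mul_funHarm :
    Integrable (Function.uncurry fun l t => geomKernel l t * funHarm f g t x)
      ((volume.restrict (Ioo 0 1)).prod (volume.restrict (Ioo 0 1))) := by
  have hcont : ContinuousOn (Function.uncurry fun l t => geomKernel l t * funHarm f g t x)
      (univ ×ˢ Ioo 0 1) :=
    continuousOn_geomKernel.mul ((continuousOn_funHarm hm).comp continuousOn_snd fun p hp => hp.2)
  have hmeas : AEStronglyMeasurable (Function.uncurry fun l t => geomKernel l t * funHarm f g t x)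
      ((volume.restrict (Ioo 0 1)).prod (volume.restrict (Ioo 0 1))) := by
    rw [Measure.prod_restrict]
    exact (hcont.mono (prod_mono (subset_univ _) subset_rfl)).aestronglyMeasurable
      (measurableSet_Ioo.prod measurableSet_Ioo)
  refine (integrable_prod_iff' hmeas).2 ⟨?_, ?_⟩
  · filter_upwards [ae_restrict_mem measurableSet_Ioo] with t ht
    have hslice : Continuous ((Function.uncurry fun l t => geomKernel l t * funHarm f g t x) ∘
        fun l => (l, t)) :=
      hcont.comp_continuous (continuous_id.prodMk continuous_const) fun l => ⟨mem_univ l, ht⟩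
    exact hslice.integrableOn_Icc.mono_set Ioo_subset_Icc_self
  · refine (integrableOn_funHarm_comp_mul_psi (x := x) hm continuousOn_id
      (mapsTo_id _)).norm.congr ?_
    filter_upwards [ae_restrict_mem measurableSet_Ioo] with t ht
    simp only [Function.uncurry_apply_pair, norm_mul, id]
    rw [Real.norm_of_nonneg (psi_pos ht).le, ← integral_geomKernel ht, ← integral_const_mul]
    refine setIntegral_congr_fun measurableSet_Ioo fun l hl => ?_
    rw [Real.norm_of_nonneg (geomKernel_nonneg (Ioo_subset_Icc_self hl) ht), mul_comm]

theorem funU_one : funU f g 1 x = funLog f g x := by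
  rw [funLog, intervalIntegral_zero_one_eq_setIntegral_Ioo]
  simp only [funGeom_eq]
  rw [integral_integral_swap (integrable_geomKernel_mul_funHarm hm), funU_eq,
    intervalIntegral_zero_one_eq_setIntegral_Ioo]
  refine setIntegral_congr_fun measurableSet_Ioo fun t ht => ?_
  rw [integral_mul_const, integral_geomKernel ht, mul_comm]
  norm_num

end FunLog

theorem funU_between_harm_and_log_general
    {E : Type*} [NormedAddCommGroup E] [NormedSpace ℝ E]
    (f g : E → ℝ)
    (hmin : ∃ φ₀ : E →L[ℝ] ℝ, ∃ c : ℝ, ∀ u : E, φ₀ u - c ≤ f u ∧ φ₀ u - c ≤ g u) :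
    (∀ s ∈ Set.Icc (0 : ℝ) 1, ∀ x : E,
      funHarm f g (1 / 2) x ≤ funU f g s x ∧
      funU f g s x ≤ (1 - s) * funHarm f g (1 / 2) x + s * funLog f g x ∧
      (1 - s) * funHarm f g (1 / 2) x + s * funLog f g x ≤ funLog f g x) ∧
    ∀ x : E,
      ConvexOn ℝ (Set.Icc (0 : ℝ) 1) (fun s => funU f g s x) ∧
      MonotoneOn (fun s => funU f g s x) (Set.Icc (0 : ℝ) 1) := by
  obtain ⟨φ₀, c, hm⟩ := hmin
  have hconvex (x : E) : ConvexOn ℝ (Icc 0 1) fun s => funU f g s x :=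
    (convexOn_funU hm).subset (Icc_subset_Icc (by norm_num) le_rfl) (convex_Icc 0 1)
  have hmono (x : E) := monotoneOn_funU (x := x) hm
  have h0 : (0:ℝ) ∈ Icc (0:ℝ) 1 := ⟨le_rfl, zero_le_one⟩
  have h1 : (1:ℝ) ∈ Icc (0:ℝ) 1 := ⟨zero_le_one, le_rfl⟩
  refine ⟨fun s hs x => ?_, fun x => ⟨hconvex x, hmono x⟩⟩
  rw [← funU_zero, ← funU_one hm]
  have hchord := (hconvex x).2 h0 h1 (sub_nonneg.2 hs.2) hs.1 (sub_add_cancel 1 s)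
  simp only [smul_eq_mul, mul_zero, mul_one, zero_add] at hchord
  have hU01 : funU f g 0 x ≤ funU f g 1 x := hmono x h0 h1 zero_le_one
  exact ⟨hmono x h0 hs hs.1, hchord, by nlinarith [hs.2]⟩

/-- For every `s ∈ [0,1]` and every `x`,
`(f ! g)(x) ≤ U_s(f,g)(x) ≤ (1−s)(f ! g)(x) + s L(f,g)(x) ≤ L(f,g)(x)`; moreover, for each
fixed `x`, the map `s ↦ U_s(f,g)(x)` is convex and monotone increasing on `[0,1]`. -/
theorem funU_between_harm_and_log
    {E : Type*} [NormedAddCommGroup E] [NormedSpace ℝ E]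
    (f g : E → ℝ)
    (hf : ConvexOn ℝ Set.univ f) (hfc : Continuous f)
    (hg : ConvexOn ℝ Set.univ g) (hgc : Continuous g)
    (hmin : ∃ φ₀ : E →L[ℝ] ℝ, ∃ c : ℝ, ∀ u : E, φ₀ u - c ≤ f u ∧ φ₀ u - c ≤ g u) :
    (∀ s ∈ Set.Icc (0 : ℝ) 1, ∀ x : E,
      funHarm f g (1 / 2) x ≤ funU f g s x ∧
      funU f g s x ≤ (1 - s) * funHarm f g (1 / 2) x + s * funLog f g x ∧
      (1 - s) * funHarm f g (1 / 2) x + s * funLog f g x ≤ funLog f g x) ∧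
    ∀ x : E,
      ConvexOn ℝ (Set.Icc (0 : ℝ) 1) (fun s => funU f g s x) ∧
      MonotoneOn (fun s => funU f g s x) (Set.Icc (0 : ℝ) 1) :=
  funU_between_harm_and_log_general f g hmin
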